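/- The dual values of the MPLP++ iterates converge: for any pairwise graphical model (V, E, Y, θ) and any fixed edge ordering, the real sequence i ↦ D(H^i(θ)) is nondecreasing, bounded above, and hence converges to a limit in ℝ. -/

import Mathlib

/-- Minimum of a real-valued function over a finite nonempty type. -/
noncomputable def fmin {Y : Type*} [Fintype Y] [Nonempty Y] (f : Y → ℝ) : ℝ :=
  Finset.univ.inf' Finset.univ_nonempty f

/-- The cost vector of a pairwise graphical model: unary costs for every vertex and
pairwise costs for every (potential) edge. -/
structure Costs (V Y : Type*) where
  un : V → Y → ℝ
  pw : V × V → Y × Y → ℝ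

/-- The dual value `D(θ) = Σ_u min_s θ_u(s) + Σ_{uv∈E} min_{(s,t)} θ_uv(s,t)`. -/
noncomputable def dual {V Y : Type*} [Fintype V] [Fintype Y] [Nonempty Y]
    (E : Finset (V × V)) (c : Costs V Y) : ℝ :=
  (∑ u, fmin (c.un u)) + ∑ e ∈ E, fmin (c.pw e)

/-- One MPLP++ edge update of the cost vector at edge `e = (u,v)`. -/
noncomputable def processEdge {V Y : Type*} [Fintype Y] [Nonempty Y] [DecidableEq V]
    (c : Costs V Y) (e : V × V) : Costs V Y :=
  let g : Y × Y → ℝ := fun p => c.un e.1 p.1 + c.un e.2 p.2 + c.pw e p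
  let θM : Y → ℝ := fun s => (1 / 2) * fmin (fun t => g (s, t))
  let θHv : Y → ℝ := fun t => fmin (fun s => g (s, t) - θM s)
  let θHu : Y → ℝ := fun s => fmin (fun t => g (s, t) - θHv t)
  { un := fun w => if w = e.1 then θHu else if w = e.2 then θHv else c.un w
    pw := fun e' => if e' = e then (fun p => g p - θHu p.1 - θHv p.2) else c.pw e' }

/-- One MPLP++ iteration `H`: process all edges in the given fixed order. -/
noncomputable def mplppIter {V Y : Type*} [Fintype Y] [Nonempty Y] [DecidableEq V]
    (order : List (V × V)) (c : Costs V Y) : Costs V Y :=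
  order.foldl processEdge c

/-!
Each edge update is a reparametrization: it only changes the three factors at `u`, `v` and `uv`,
and `θ_u(s) + θ_v(t) + θ_uv(s,t)` stays equal to `g(s,t)`, so the energy of every labeling is
invariant while the dual is a lower bound on it. Locally the dual cannot decrease: the new
unary minima are both at least `½ min g`, the new pairwise costs are nonnegative, and
`min g` dominates the old local sum of minima. Hence `i ↦ D(Hⁱ θ)` is nondecreasing and bounded
by the energy of any fixed labeling of `θ`, so it converges to its supremum.
-/

open Finset

section Fmin

variable {Y : Type*} [Fintype Y] [Nonempty Y]

lemma fmin_le (f : Y → ℝ) (y : Y) : fmin f ≤ f y :=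
  inf'_le _ (mem_univ y)

lemma le_fmin {f : Y → ℝ} {a : ℝ} (h : ∀ y, a ≤ f y) : a ≤ fmin f :=
  le_inf' _ _ fun y _ => h y

end Fmin

lemma Finset.sum_apply_ite_eq {ι β M : Type*} [DecidableEq ι] [AddCommGroup M] {s : Finset ι}
    {a : ι} (ha : a ∈ s) (φ : ι → β → M) (g : ι → β) (b : β) :
    ∑ i ∈ s, φ i (if i = a then b else g i) = ∑ i ∈ s, φ i (g i) + (φ a b - φ a (g a)) := by
  rw [← add_sum_erase s _ ha, ← add_sum_erase s _ ha, if_pos rfl,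
    sum_congr rfl fun i hi => by rw [if_neg (ne_of_mem_erase hi)]]
  abel

lemma List.le_apply_foldl {α β γ : Type*} [Preorder γ] {F : α → γ} {f : α → β → α}
    {l : List β} (h : ∀ b ∈ l, ∀ a, F a ≤ F (f a b)) (a : α) : F a ≤ F (l.foldl f a) := by
  induction l generalizing a with
  | nil => exact le_rfl
  | cons b l ih =>
    exact (h b mem_cons_self a).trans (ih (fun b' hb' => h b' (mem_cons_of_mem b hb')) _)

lemma List.apply_foldl_eq {α β γ : Type*} {F : α → γ} {f : α → β → α}
    {l : List β} (h : ∀ b ∈ l, ∀ a, F (f a b) = F a) (a : α) : F (l.foldl f a) = F a := by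
  induction l generalizing a with
  | nil => rfl
  | cons b l ih =>
    exact (ih (fun b' hb' => h b' (mem_cons_of_mem b hb')) _).trans (h b mem_cons_self a)

namespace Costs

variable {V Y : Type*}

/-- Both the dual and the energy of a labeling are of this form. -/
def factorSum [Fintype V] (φ : V → (Y → ℝ) → ℝ) (ψ : V × V → (Y × Y → ℝ) → ℝ)
    (E : Finset (V × V)) (c : Costs V Y) : ℝ :=
  ∑ u, φ u (c.un u) + ∑ e ∈ E, ψ e (c.pw e)

def edgeSum (φ : V → (Y → ℝ) → ℝ) (ψ : V × V → (Y × Y → ℝ) → ℝ) (c : Costs V Y)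
    (e : V × V) : ℝ :=
  φ e.1 (c.un e.1) + φ e.2 (c.un e.2) + ψ e (c.pw e)

def energy [Fintype V] (E : Finset (V × V)) (x : V → Y) (c : Costs V Y) : ℝ :=
  factorSum (fun u f => f (x u)) (fun uv f => f (x uv.1, x uv.2)) E c

lemma dual_eq_factorSum [Fintype V] [Fintype Y] [Nonempty Y] (E : Finset (V × V))
    (c : Costs V Y) : dual E c = factorSum (fun _ => fmin) (fun _ => fmin) E c :=
  rfl

lemma dual_le_energy [Fintype V] [Fintype Y] [Nonempty Y] (E : Finset (V × V)) (x : V → Y)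
    (c : Costs V Y) : dual E c ≤ energy E x c := by
  unfold dual energy factorSum
  gcongr <;> exact fmin_le _ _

end Costs

open Costs

section processEdge

variable {V Y : Type*} [Fintype Y] [Nonempty Y]

noncomputable def pencil (c : Costs V Y) (e : V × V) : Y × Y → ℝ :=
  fun p => c.un e.1 p.1 + c.un e.2 p.2 + c.pw e p

noncomputable def thetaM (c : Costs V Y) (e : V × V) : Y → ℝ :=
  fun s => (1 / 2) * fmin fun t => pencil c e (s, t)

noncomputable def thetaHv (c : Costs V Y) (e : V × V) : Y → ℝ :=
  fun t => fmin fun s => pencil c e (s, t) - thetaM c e s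

noncomputable def thetaHu (c : Costs V Y) (e : V × V) : Y → ℝ :=
  fun s => fmin fun t => pencil c e (s, t) - thetaHv c e t

lemma half_fmin_pencil_le_thetaHv (c : Costs V Y) (e : V × V) (t : Y) :
    (1 / 2) * fmin (pencil c e) ≤ thetaHv c e t := by
  refine le_fmin fun s => ?_
  have hrow : fmin (pencil c e) ≤ fmin fun t' => pencil c e (s, t') :=
    le_fmin fun t' => fmin_le _ _
  have hentry : (fmin fun t' => pencil c e (s, t')) ≤ pencil c e (s, t) := fmin_le _ _
  simp only [thetaM]
  linarith

lemma half_fmin_pencil_le_thetaHu (c : Costs V Y) (e : V × V) (s : Y) :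
    (1 / 2) * fmin (pencil c e) ≤ thetaHu c e s := by
  refine le_fmin fun t => ?_
  have hcol : thetaHv c e t ≤ pencil c e (s, t) - thetaM c e s := fmin_le _ _
  have hrow : fmin (pencil c e) ≤ fmin fun t' => pencil c e (s, t') :=
    le_fmin fun t' => fmin_le _ _
  simp only [thetaM] at hcol ⊢
  linarith

variable [DecidableEq V]

lemma processEdge_eq (c : Costs V Y) (e : V × V) :
    processEdge c e =
      { un := fun w => if w = e.1 then thetaHu c e else if w = e.2 then thetaHv c e else c.un w
        pw := fun e' => if e' = e then fun p => pencil c e p - thetaHu c e p.1 - thetaHv c e p.2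
          else c.pw e' } :=
  rfl

lemma factorSum_processEdge [Fintype V] (φ : V → (Y → ℝ) → ℝ) (ψ : V × V → (Y × Y → ℝ) → ℝ)
    {E : Finset (V × V)} {e : V × V} (he : e ∈ E) (hne : e.1 ≠ e.2) (c : Costs V Y) :
    factorSum φ ψ E (processEdge c e) - factorSum φ ψ E c =
      edgeSum φ ψ (processEdge c e) e - edgeSum φ ψ c e := by
  simp only [factorSum, edgeSum, processEdge_eq, if_pos, if_neg hne, if_neg hne.symm,
    sum_apply_ite_eq (mem_univ _), sum_apply_ite_eq he]
  ring

lemma edgeSum_dual_le_processEdge {e : V × V} (hne : e.1 ≠ e.2) (c : Costs V Y) :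
    edgeSum (fun _ => fmin) (fun _ => fmin) c e ≤
      edgeSum (fun _ => fmin) (fun _ => fmin) (processEdge c e) e := by
  simp only [edgeSum, processEdge_eq, if_pos, if_neg hne.symm]
  have hold : fmin (c.un e.1) + fmin (c.un e.2) + fmin (c.pw e) ≤ fmin (pencil c e) :=
    le_fmin fun p => by
      have := fmin_le (c.un e.1) p.1
      have := fmin_le (c.un e.2) p.2
      have := fmin_le (c.pw e) p
      simp only [pencil]
      linarith
  have hu := le_fmin (half_fmin_pencil_le_thetaHu c e)
  have hv := le_fmin (half_fmin_pencil_le_thetaHv c e)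
  have huv : 0 ≤ fmin fun p => pencil c e p - thetaHu c e p.1 - thetaHv c e p.2 :=
    le_fmin fun p => by
      have : thetaHu c e p.1 ≤ pencil c e (p.1, p.2) - thetaHv c e p.2 := fmin_le _ _
      linarith
  linarith

lemma edgeSum_energy_processEdge {e : V × V} (hne : e.1 ≠ e.2) (x : V → Y) (c : Costs V Y) :
    edgeSum (fun u f => f (x u)) (fun uv f => f (x uv.1, x uv.2)) (processEdge c e) e =
      edgeSum (fun u f => f (x u)) (fun uv f => f (x uv.1, x uv.2)) c e := by
  simp only [edgeSum, processEdge_eq, if_pos, if_neg hne.symm, pencil]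
  ring

variable [Fintype V] {E : Finset (V × V)} {e : V × V}

lemma dual_le_dual_processEdge (he : e ∈ E) (hne : e.1 ≠ e.2) (c : Costs V Y) :
    dual E c ≤ dual E (processEdge c e) := by
  have := factorSum_processEdge (fun _ => fmin) (fun _ => fmin) he hne c
  have := edgeSum_dual_le_processEdge hne c
  rw [dual_eq_factorSum, dual_eq_factorSum]
  linarith

lemma energy_processEdge (he : e ∈ E) (hne : e.1 ≠ e.2) (x : V → Y) (c : Costs V Y) :
    energy E x (processEdge c e) = energy E x c := by
  have := factorSum_processEdge (fun u f => f (x u)) (fun uv f => f (x uv.1, x uv.2)) he hne c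
  rw [edgeSum_energy_processEdge hne] at this
  exact sub_eq_zero.1 (this.trans (sub_self _))

lemma dual_le_dual_mplppIter {order : List (V × V)} (horder : ∀ e ∈ order, e ∈ E)
    (hE : ∀ e ∈ E, e.1 ≠ e.2) (c : Costs V Y) : dual E c ≤ dual E (mplppIter order c) :=
  List.le_apply_foldl (fun e he => dual_le_dual_processEdge (horder e he) (hE e (horder e he))) c

lemma energy_comp_mplppIter {order : List (V × V)} (horder : ∀ e ∈ order, e ∈ E)
    (hE : ∀ e ∈ E, e.1 ≠ e.2) (x : V → Y) : energy E x ∘ mplppIter order = energy E x :=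
  funext <| List.apply_foldl_eq fun e he =>
    energy_processEdge (horder e he) (hE e (horder e he)) x

end processEdge

theorem mplpp_dual_converges_general {V Y : Type*} [Fintype V] [Fintype Y] [Nonempty Y] [DecidableEq V]
    (E : Finset (V × V)) (hE : ∀ e ∈ E, e.1 ≠ e.2)
    (order : List (V × V)) (horder : ∀ e, e ∈ order ↔ e ∈ E)
    (c : Costs V Y) :
    Monotone (fun i => dual E ((mplppIter order)^[i] c)) ∧
    BddAbove (Set.range fun i => dual E ((mplppIter order)^[i] c)) ∧
    ∃ L : ℝ, Filter.Tendsto (fun i => dual E ((mplppIter order)^[i] c)) Filter.atTop (nhds L) := by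
  have hmem : ∀ e ∈ order, e ∈ E := fun e he => (horder e).1 he
  have hmono : Monotone fun i => dual E ((mplppIter order)^[i] c) :=
    monotone_nat_of_le_succ fun i => by
      rw [Function.iterate_succ_apply']
      exact dual_le_dual_mplppIter hmem hE _
  obtain ⟨y⟩ := ‹Nonempty Y›
  have hbdd : BddAbove (Set.range fun i => dual E ((mplppIter order)^[i] c)) := by
    refine ⟨energy E (fun _ => y) c, ?_⟩
    rintro _ ⟨i, rfl⟩
    calc dual E ((mplppIter order)^[i] c) ≤ energy E (fun _ => y) ((mplppIter order)^[i] c) :=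
          dual_le_energy E _ _
      _ = energy E (fun _ => y) c :=
          congrFun (Function.iterate_invariant (energy_comp_mplppIter hmem hE _) i) c
  exact ⟨hmono, hbdd, _, tendsto_atTop_ciSup hmono hbdd⟩

/-- The dual values of the MPLP++ iterates form a nondecreasing sequence which is
bounded above and hence converges to a real limit. -/
theorem mplpp_dual_converges {V Y : Type*} [Fintype V] [Fintype Y] [Nonempty Y] [DecidableEq V]
    (E : Finset (V × V)) (hE : ∀ e ∈ E, e.1 ≠ e.2)
    (order : List (V × V)) (horder : ∀ e, e ∈ order ↔ e ∈ E) (hnodup : order.Nodup)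
    (c : Costs V Y) :
    Monotone (fun i => dual E ((mplppIter order)^[i] c)) ∧
    BddAbove (Set.range fun i => dual E ((mplppIter order)^[i] c)) ∧
    ∃ L : ℝ, Filter.Tendsto (fun i => dual E ((mplppIter order)^[i] c)) Filter.atTop (nhds L) :=
  mplpp_dual_converges_general E hE order horder c
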